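/- Let s be a Hadamard matrix of order 4k (k > 1) with s_{i,1} = 1 for all i. Then for all column indices i, j, Σ_{m=1}^{4k} (N_{ij}^m)² = k², where N_{ij}^m := (1/4) Σ_{l=1}^{4k} s_{li} s_{lj} s_{lm}. -/

import Mathlib

/-!
With `v l = s l i * s l j`, the inner sum `∑ l, s l i * s l j * s l m` is the entry `(v ᵥ* s) m`,
so row orthogonality gives `∑ m, (v ᵥ* s) m ^ 2 = v ᵥ* (s * sᵀ) ⬝ᵥ v = 4k · (v ⬝ᵥ v) = (4k)²`.
The integer division by `4` is exact: columns are orthogonal too, and expanding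
`∑ l, (1 + a l) * (1 + b l) * (1 + c l)`, which is divisible by `8` for `±1`-vectors, into
column inner products (all divisible by `4`) leaves `4 ∣ ∑ l, a l * b l * c l`.
-/

open Matrix

theorem Matrix.vecMul_dotProduct_vecMul_self_of_mul_transpose_eq_smul_one
    {m n R : Type*} [Fintype m] [Fintype n] [DecidableEq m] [CommSemiring R]
    {A : Matrix m n R} {c : R} (hA : A * Aᵀ = c • 1) (v : m → R) :
    v ᵥ* A ⬝ᵥ v ᵥ* A = c * (v ⬝ᵥ v) := by
  rw [← dotProduct_mulVec, ← mulVec_transpose, mulVec_mulVec, hA, smul_mulVec, one_mulVec,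
    dotProduct_smul, smul_eq_mul]

namespace Matrix.IsHadamard

variable {n : Type*} [Fintype n] [DecidableEq n] {A : Matrix n n ℤ}

theorem apply_eq_one_or_eq_neg_one (hA : A.IsHadamard) (i j : n) : A i j = 1 ∨ A i j = -1 :=
  Unitary.mem_iff_eq_one_or_eq_neg_one.mp (hA.apply_mem i j)

theorem sum_col_mul_col (hA : A.IsHadamard) (a b : n) :
    ∑ l, A l a * A l b = if a = b then (Fintype.card n : ℤ) else 0 := by
  simpa [Matrix.mul_apply, Matrix.one_apply] using congr_fun (congr_fun hA.conjTranspose_mul a) b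

theorem four_dvd_sum_col_mul_col (hA : A.IsHadamard) (hcard : 2 < Fintype.card n) (a b : n) :
    4 ∣ ∑ l, A l a * A l b := by
  rw [hA.sum_col_mul_col]
  split_ifs
  · exact Int.natCast_dvd_natCast.mpr (hA.four_dvd_card hcard)
  · exact dvd_zero 4

theorem four_dvd_sum_col_mul_col_mul_col (hA : A.IsHadamard) (hcard : 2 < Fintype.card n) {c : n}
    (hc : ∀ l, A l c = 1) (a b d : n) : 4 ∣ ∑ l, A l a * A l b * A l d := by
  have h8 : (8 : ℤ) ∣ ∑ l, (1 + A l a) * (1 + A l b) * (1 + A l d) :=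
    Finset.dvd_sum fun l _ => by
      rcases hA.apply_eq_one_or_eq_neg_one l a with h | h <;>
      rcases hA.apply_eq_one_or_eq_neg_one l b with h' | h' <;>
      rcases hA.apply_eq_one_or_eq_neg_one l d with h'' | h'' <;> simp [h, h', h'']
  -- Each column sum and the order itself are inner products with the all-ones column `c`.
  have hexpand : ∑ l, (1 + A l a) * (1 + A l b) * (1 + A l d) =
      ∑ l, A l c * A l c + ∑ l, A l a * A l c + ∑ l, A l b * A l c + ∑ l, A l d * A l c +
        ∑ l, A l a * A l b + ∑ l, A l a * A l d + ∑ l, A l b * A l d +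
        ∑ l, A l a * A l b * A l d := by
    simp only [hc, mul_one, ← Finset.sum_add_distrib]
    exact Finset.sum_congr rfl fun l _ => by ring
  have h4 := hA.four_dvd_sum_col_mul_col hcard
  rw [hexpand] at h8
  have := h4 c c; have := h4 a c; have := h4 b c; have := h4 d c
  have := h4 a b; have := h4 a d; have := h4 b d
  omega

end Matrix.IsHadamard

/-- Let `s` be a Hadamard matrix of order `4k` (`k > 1`)
with first column all ones.  Then for all column indices `i, j`,
`∑ m, (N_{ij}^m)² = k²`, where `N_{ij}^m = (1/4) ∑ l, s l i * s l j * s l m`. -/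
theorem hadamard_structure_constants_sum_sq
    (k : ℕ) (hk : 1 < k)
    (s : Matrix (Fin (4 * k)) (Fin (4 * k)) ℤ)
    (hpm : ∀ i j, s i j = 1 ∨ s i j = -1)
    (hH : s * s.transpose = (4 * (k : ℤ)) • 1)
    (h1 : ∀ i, s i ⟨0, by omega⟩ = 1) :
    ∀ i j, (∑ m, ((∑ l, s l i * s l j * s l m) / 4) ^ 2) = (k : ℤ) ^ 2 := by
  have hcard : (Fintype.card (Fin (4 * k)) : ℤ) = 4 * k := by simp
  have hs : s.IsHadamard :=
    .of_mul_conjTranspose (fun i j => Unitary.mem_iff_eq_one_or_eq_neg_one.mpr (hpm i j))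
      (by rwa [conjTranspose_eq_transpose_of_trivial, hcard])
      (.of_ne_zero (by rw [hcard]; positivity))
  intro i j
  set v : Fin (4 * k) → ℤ := fun l => s l i * s l j
  change ∑ m, ((v ᵥ* s) m / 4) ^ 2 = _
  have hv : v ⬝ᵥ v = 4 * k := by
    have hvv : ∀ l, v l * v l = 1 := fun l => by
      rcases hpm l i with h | h <;> rcases hpm l j with h' | h' <;> simp [v, h, h']
    simp [dotProduct, hvv]
  have hdvd : ∀ m, 4 ∣ (v ᵥ* s) m :=
    hs.four_dvd_sum_col_mul_col_mul_col (by rw [Fintype.card_fin]; omega) h1 i j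
  have hsq : ∑ m, ((v ᵥ* s) m) ^ 2 = 16 * k ^ 2 := by
    simp_rw [sq]
    rw [← dotProduct, vecMul_dotProduct_vecMul_self_of_mul_transpose_eq_smul_one hH, hv]
    ring
  refine mul_left_cancel₀ (by norm_num : (16 : ℤ) ≠ 0) ?_
  rw [← hsq, Finset.mul_sum]
  refine Finset.sum_congr rfl fun m _ => ?_
  obtain ⟨q, hq⟩ := hdvd m
  rw [hq, Int.mul_ediv_cancel_left _ four_ne_zero]
  ring
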